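/- (a) For every j ∈ ℤ/nℤ and every measurable S ⊆ Σ, one has μ̃_{η,j}(σ̂⁻¹(S) ∩ {ε : ε₀ ≠ 1}) = |λ_{η(j)}|² · μ̃_{η,j+1}(S). (b) The measure μ_η is a probability measure on Σ and an eigenmeasure of the open shift with decay rate Λ_η, i.e. μ_η(σ̂⁻¹(S) ∩ {ε : ε₀ ≠ 1}) = Λ_η·μ_η(S) for every measurable S ⊆ Σ. -/

import Mathlib

open MeasureTheory
open scoped ENNReal

/-- The two-sided shift on `Σ = {0,1,2}^ℤ`. -/
def shiftMap (ε : ℤ → Fin 3) : ℤ → Fin 3 := fun n => ε (n + 1)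

/-- `μ` is the product measure on `{0,1,2}^ℤ` with one-site weights `P n` at coordinate `n`. -/
def IsProductMeasure (μ : Measure (ℤ → Fin 3)) (P : ℤ → Fin 3 → ℝ) : Prop :=
  ∀ (s : Finset ℤ) (g : ℤ → Fin 3),
    μ {ε | ∀ i ∈ s, ε i = g i} = ∏ i ∈ s, ENNReal.ofReal (P i (g i))

/-- The 3×3 discrete Fourier transform. -/
noncomputable def dft3 : Matrix (Fin 3) (Fin 3) ℂ := fun j k =>
  (((Real.sqrt 3)⁻¹ : ℝ) : ℂ) *
    Complex.exp (-2 * Real.pi * Complex.I * ((j : ℕ) : ℂ) * ((k : ℕ) : ℂ) / 3)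

/-- The orthogonal projection of `ℂ³` onto `span(e₀,e₂)`. -/
def pi02 : Matrix (Fin 3) (Fin 3) ℂ := fun i j => if i = j ∧ i ≠ 1 then 1 else 0

/-- The matrix `F̃₃* = F₃* ∘ π₀₂`. -/
noncomputable def F3tilde : Matrix (Fin 3) (Fin 3) ℂ := dft3.conjTranspose * pi02

/-- The weight `P(e) = |v(e)|²`. -/
noncomputable def Pweight (v : Fin 3 → ℂ) (e : Fin 3) : ℝ := ‖v e‖ ^ 2

/-- The weight `P*(e) = |(F₃v)(e)|²`. -/
noncomputable def PstarWeight (v : Fin 3 → ℂ) (e : Fin 3) : ℝ :=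
  ‖dft3.mulVec v e‖ ^ 2

/-- The fraction `t(η)` of symbols `+` in `η`. -/
noncomputable def tplus (n : ℕ) (hn : 0 < n) (η : ZMod n → Bool) : ℝ :=
  haveI : NeZero n := ⟨hn.ne'⟩
  ((Finset.univ.filter fun j => η j = true).card : ℝ) / n

/-- The decay rate `Λ_η = |λ₋|^{2(1-t(η))}·|λ₊|^{2t(η)}`. -/
noncomputable def LamEta (lp lm : ℂ) (n : ℕ) (hn : 0 < n) (η : ZMod n → Bool) : ℝ :=
  ‖lm‖ ^ (2 * (1 - tplus n hn η)) * ‖lp‖ ^ (2 * tplus n hn η)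

/-- The coefficient `C_{η,j} = Π_{m<j} (|λ_{η(m)}|²/Λ_η)`. -/
noncomputable def Cweight (lp lm : ℂ) (n : ℕ) (hn : 0 < n) (η : ZMod n → Bool)
    (j : ZMod n) : ℝ :=
  haveI : NeZero n := ⟨hn.ne'⟩
  ∏ m ∈ Finset.range j.val,
    (‖if η (m : ZMod n) then lp else lm‖ ^ 2 / LamEta lp lm n hn η)

/-- The family `μ̃_{η,j}`: each `μt j` is the product probability measure whose factor at
coordinate `m ∈ ℤ` is `P_{η(j+m)}` if `m ≥ 0` and `P*_{η(j+m)}` if `m < 0`. -/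
def IsTildeFamily (vp vm : Fin 3 → ℂ) (n : ℕ) (hn : 0 < n) (η : ZMod n → Bool)
    (μt : ZMod n → Measure (ℤ → Fin 3)) : Prop :=
  ∀ j : ZMod n, IsProbabilityMeasure (μt j) ∧
    IsProductMeasure (μt j) (fun m e =>
      if 0 ≤ m then Pweight (if η (j + (m : ZMod n)) then vp else vm) e
      else PstarWeight (if η (j + (m : ZMod n)) then vp else vm) e)

/-- The eigenmeasure `μ_η = 𝒩_η⁻¹ Σ_j C_{η,j} μ̃_{η,j}`. -/
noncomputable def muEta (lp lm : ℂ) (n : ℕ) (hn : 0 < n) (η : ZMod n → Bool)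
    (μt : ZMod n → Measure (ℤ → Fin 3)) : Measure (ℤ → Fin 3) :=
  haveI : NeZero n := ⟨hn.ne'⟩
  (ENNReal.ofReal (∑ j : ZMod n, Cweight lp lm n hn η j))⁻¹ •
    ∑ j : ZMod n, ENNReal.ofReal (Cweight lp lm n hn η j) • μt j

/-! On a cylinder, the open shift carries `μ̃_{η,j}` to `μ̃_{η,j+1}`: the one-site weights are
only relabelled, except at the site moving from position `0` to position `-1`. There the
eigenvector equation, combined with `F₃ F₃* = 1`, reads `λ • F₃ v = π₀₂ v`, i.e. `|λ|² P*(e) = P(e)`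
off the hole and `P*(1) = 0`, which is exactly what removing the hole `{ε₀ = 1}` does to the
left-hand side. Cylinders determine finite measures, which gives (a). For (b), the product of
`|λ_{η(m)}|²` over one period is `Λ_η ^ n`, so the coefficients satisfy
`C_j |λ_{η(j)}|² = Λ_η C_{j+1}` cyclically, and the normalised mixture of the `μ̃_{η,j}` is
reproduced by the open shift up to the factor `Λ_η`. -/

section PointCylinder

variable {ι α : Type*}

def pointCylinder (s : Finset ι) (g : ι → α) : Set (ι → α) := {ε | ∀ i ∈ s, ε i = g i}

@[simp]
lemma mem_pointCylinder {s : Finset ι} {g ε : ι → α} :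
    ε ∈ pointCylinder s g ↔ ∀ i ∈ s, ε i = g i :=
  Iff.rfl

lemma pointCylinder_empty (g : ι → α) : pointCylinder ∅ g = Set.univ := by
  ext; simp

lemma isPiSystem_pointCylinders : IsPiSystem {S : Set (ι → α) | ∃ s g, S = pointCylinder s g} := by
  classical
  rintro _ ⟨s, g, rfl⟩ _ ⟨t, h, rfl⟩ ⟨ε, hεs, hεt⟩
  refine ⟨s ∪ t, s.piecewise g h, Set.ext fun x => ?_⟩
  simp only [Set.mem_inter_iff, mem_pointCylinder, Finset.mem_union]
  constructor
  · rintro ⟨hs, ht⟩ i (hi | hi)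
    · rw [Finset.piecewise_eq_of_mem _ _ _ hi, hs i hi]
    · by_cases his : i ∈ s
      · rw [Finset.piecewise_eq_of_mem _ _ _ his, hs i his]
      · rw [Finset.piecewise_eq_of_notMem _ _ _ his, ht i hi]
  · intro hx
    refine ⟨fun i hi => by simpa [hi] using hx i (Or.inl hi), fun i hi => ?_⟩
    by_cases his : i ∈ s
    · rw [hx i (Or.inl his), Finset.piecewise_eq_of_mem _ _ _ his, ← hεs i his, hεt i hi]
    · simpa [his] using hx i (Or.inr hi)

lemma pointCylinder_eq_iUnion_update [DecidableEq ι] {s : Finset ι} {i : ι} (hi : i ∉ s)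
    (g : ι → α) : pointCylinder s g = ⋃ e, pointCylinder (insert i s) (Function.update g i e) := by
  ext ε
  simp only [mem_pointCylinder, Set.mem_iUnion, Finset.forall_mem_insert, Function.update_self]
  refine ⟨fun h => ⟨ε i, rfl, fun k hk => ?_⟩, fun ⟨e, _, h⟩ k hk => ?_⟩
  · rw [Function.update_of_ne (ne_of_mem_of_not_mem hk hi), h k hk]
  · rw [h k hk, Function.update_of_ne (ne_of_mem_of_not_mem hk hi)]

lemma pairwise_disjoint_pointCylinder_update [DecidableEq ι] (s : Finset ι) (i : ι)
    (g : ι → α) :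
    Pairwise (Function.onFun Disjoint fun e =>
      pointCylinder (insert i s) (Function.update g i e)) := by
  intro e e' hne
  refine Set.disjoint_left.2 fun ε hε hε' => hne ?_
  simpa using (hε i (Finset.mem_insert_self i s)).symm.trans (hε' i (Finset.mem_insert_self i s))

variable [MeasurableSpace α] [MeasurableSingletonClass α]

lemma measurableSet_pointCylinder (s : Finset ι) (g : ι → α) :
    MeasurableSet (pointCylinder s g) := by
  have : pointCylinder s g = ⋂ i ∈ s, Function.eval i ⁻¹' {g i} := by ext; simp
  rw [this]
  exact .biInter s.countable_toSet fun i _ => measurable_pi_apply i (measurableSet_singleton _)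

lemma measure_pointCylinder_eq_sum_update [DecidableEq ι] [Fintype α] (μ : Measure (ι → α))
    {s : Finset ι} {i : ι} (hi : i ∉ s) (g : ι → α) :
    μ (pointCylinder s g) = ∑ e, μ (pointCylinder (insert i s) (Function.update g i e)) := by
  rw [pointCylinder_eq_iUnion_update hi,
    measure_iUnion (pairwise_disjoint_pointCylinder_update s i g)
      fun _ => measurableSet_pointCylinder _ _, tsum_fintype]

lemma generateFrom_pointCylinders [Countable α] :
    MeasurableSpace.pi = MeasurableSpace.generateFrom
      {S : Set (ι → α) | ∃ s g, S = pointCylinder s g} := by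
  refine le_antisymm (iSup_le fun i => Measurable.comap_le ?_) ?_
  · exact @measurable_to_countable' α (ι → α) _ _ (.generateFrom _) (Function.eval i) fun x =>
      MeasurableSpace.measurableSet_generateFrom ⟨{i}, fun _ => x, by ext; simp⟩
  · refine MeasurableSpace.generateFrom_le ?_
    rintro _ ⟨s, g, rfl⟩
    exact measurableSet_pointCylinder s g

/-- Every cylinder is the disjoint union of its refinements at `i₀`. -/
lemma ext_of_pointCylinder_of_mem [Fintype α] {μ ν : Measure (ι → α)} [IsFiniteMeasure μ]
    (i₀ : ι) (h : ∀ s g, i₀ ∈ s → μ (pointCylinder s g) = ν (pointCylinder s g)) : μ = ν := by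
  classical
  have hall : ∀ s g, μ (pointCylinder s g) = ν (pointCylinder s g) := by
    intro s g
    by_cases hs : i₀ ∈ s
    · exact h s g hs
    · simp only [measure_pointCylinder_eq_sum_update _ hs,
        h _ _ (Finset.mem_insert_self i₀ s)]
  refine ext_of_generate_finite _ generateFrom_pointCylinders isPiSystem_pointCylinders ?_ ?_
  · rintro _ ⟨s, g, rfl⟩
    exact hall s g
  · rcases isEmpty_or_nonempty (ι → α) with hempty | ⟨⟨g⟩⟩
    · simp [Set.univ_eq_empty_iff.2 hempty]
    · simpa only [pointCylinder_empty] using hall ∅ g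

end PointCylinder

lemma measurable_shiftMap : Measurable shiftMap :=
  measurable_pi_iff.2 fun n => measurable_pi_apply (n + 1)

lemma shiftMap_preimage_pointCylinder (s : Finset ℤ) (g : ℤ → Fin 3) :
    shiftMap ⁻¹' pointCylinder s g
      = pointCylinder (s.map (addRightEmbedding 1)) (fun i => g (i - 1)) := by
  ext ε
  simp [shiftMap]

namespace IsProductMeasure

variable {μ ν : Measure (ℤ → Fin 3)} {P Q : ℤ → Fin 3 → ℝ}

lemma measure_pointCylinder (hμ : IsProductMeasure μ P) (s : Finset ℤ) (g : ℤ → Fin 3) :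
    μ (pointCylinder s g) = ∏ i ∈ s, ENNReal.ofReal (P i (g i)) :=
  hμ s g

lemma isProbabilityMeasure (hμ : IsProductMeasure μ P) : IsProbabilityMeasure μ :=
  ⟨by simpa using hμ ∅ 0⟩

variable {c : ℝ}

lemma measure_shiftMap_preimage_pointCylinder_inter (hμ : IsProductMeasure μ P)
    (hν : IsProductMeasure ν Q) (hc : 0 ≤ c) (hshift : ∀ i ≠ -1, P (i + 1) = Q i)
    (hhole : ∀ e, (if e = 1 then 0 else P 0 e) = c * Q (-1) e) {s : Finset ℤ} (hs : -1 ∈ s)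
    (g : ℤ → Fin 3) :
    μ (shiftMap ⁻¹' pointCylinder s g ∩ {ε | ε 0 ≠ 1})
      = ENNReal.ofReal c * ν (pointCylinder s g) := by
  have hν_split : ν (pointCylinder s g)
      = ENNReal.ofReal (Q (-1) (g (-1))) * ∏ i ∈ s.erase (-1), ENNReal.ofReal (Q i (g i)) := by
    rw [Finset.mul_prod_erase s (fun i => ENNReal.ofReal (Q i (g i))) hs, hν.measure_pointCylinder]
  rw [hν_split, ← mul_assoc, ← ENNReal.ofReal_mul hc, ← hhole]
  have hε0 : ∀ ε ∈ shiftMap ⁻¹' pointCylinder s g, ε 0 = g (-1) := fun ε hε => by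
    simpa [shiftMap] using hε (-1) hs
  by_cases hg : g (-1) = 1
  · have hempty : shiftMap ⁻¹' pointCylinder s g ∩ {ε | ε 0 ≠ 1} = ∅ :=
      Set.eq_empty_of_forall_notMem fun ε ⟨hε, hε1⟩ => hε1 ((hε0 ε hε).trans hg)
    rw [hempty, measure_empty, if_pos hg, ENNReal.ofReal_zero, zero_mul]
  · have hsub : shiftMap ⁻¹' pointCylinder s g ⊆ {ε | ε 0 ≠ 1} := fun ε hε =>
      (hε0 ε hε).trans_ne hg
    have hrest : ∏ i ∈ s.erase (-1), ENNReal.ofReal (P (i + 1) (g i))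
        = ∏ i ∈ s.erase (-1), ENNReal.ofReal (Q i (g i)) :=
      Finset.prod_congr rfl fun i hi => by rw [hshift i (Finset.ne_of_mem_erase hi)]
    rw [Set.inter_eq_left.2 hsub, if_neg hg, shiftMap_preimage_pointCylinder,
      hμ.measure_pointCylinder, Finset.prod_map, ← Finset.mul_prod_erase _ _ hs, ← hrest]
    simp

lemma measure_shiftMap_preimage_inter (hμ : IsProductMeasure μ P) (hν : IsProductMeasure ν Q)
    (hc : 0 ≤ c) (hshift : ∀ i ≠ -1, P (i + 1) = Q i)
    (hhole : ∀ e, (if e = 1 then 0 else P 0 e) = c * Q (-1) e) {S : Set (ℤ → Fin 3)}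
    (hS : MeasurableSet S) :
    μ (shiftMap ⁻¹' S ∩ {ε | ε 0 ≠ 1}) = ENNReal.ofReal c * ν S := by
  have := hμ.isProbabilityMeasure
  have hmap : (μ.restrict {ε | ε 0 ≠ 1}).map shiftMap = ENNReal.ofReal c • ν := by
    refine ext_of_pointCylinder_of_mem (-1) fun s g hs => ?_
    have hmeas := measurableSet_pointCylinder s g
    rw [Measure.map_apply measurable_shiftMap hmeas,
      Measure.restrict_apply (measurable_shiftMap hmeas), Measure.smul_apply, smul_eq_mul]
    exact measure_shiftMap_preimage_pointCylinder_inter hμ hν hc hshift hhole hs g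
  rw [← Measure.restrict_apply (measurable_shiftMap hS), ← Measure.map_apply measurable_shiftMap hS,
    hmap, Measure.smul_apply, smul_eq_mul]

end IsProductMeasure

lemma IsPrimitiveRoot.sum_range_pow_mul {R : Type*} [CommRing R] [IsDomain R] {ζ : R} {k : ℕ}
    (hζ : IsPrimitiveRoot ζ k) (r : ℕ) :
    ∑ m ∈ Finset.range k, ζ ^ (m * r) = if k ∣ r then (k : R) else 0 := by
  simp_rw [mul_comm _ r, pow_mul]
  split_ifs with hr
  · simp [(hζ.pow_eq_one_iff_dvd r).2 hr]
  · refine eq_zero_of_ne_zero_of_mul_right_eq_zero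
      (sub_ne_zero.2 (mt (hζ.pow_eq_one_iff_dvd r).1 hr)) ?_
    rw [geom_sum_mul, ← pow_mul, mul_comm, pow_mul, hζ.pow_eq_one, one_pow, sub_self]

lemma isPrimitiveRoot_exp_neg_two_pi_I_div_three :
    IsPrimitiveRoot (Complex.exp (-2 * Real.pi * Complex.I / 3)) 3 := by
  have h := (Complex.isPrimitiveRoot_exp 3 (by norm_num)).inv
  rwa [← Complex.exp_neg, show -(2 * Real.pi * Complex.I / (3 : ℕ)) = -2 * Real.pi * Complex.I / 3
    by push_cast; ring] at h

lemma dft3_apply (j k : Fin 3) :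
    dft3 j k = (((Real.sqrt 3)⁻¹ : ℝ) : ℂ) *
      Complex.exp (-2 * Real.pi * Complex.I / 3) ^ ((j : ℕ) * (k : ℕ)) := by
  rw [dft3, ← Complex.exp_nat_mul]
  push_cast
  ring_nf

lemma dft3_mul_conjTranspose : dft3 * dft3.conjTranspose = 1 := by
  set ζ := Complex.exp (-2 * Real.pi * Complex.I / 3) with hζ_def
  have hζ := isPrimitiveRoot_exp_neg_two_pi_I_div_three
  have hstar : star ζ = ζ ^ 2 := by
    rw [Complex.star_def, ← Complex.inv_eq_conj (hζ.norm'_eq_one (by norm_num))]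
    exact inv_eq_of_mul_eq_one_right (by rw [← pow_succ', hζ.pow_eq_one])
  have hc : ((((Real.sqrt 3)⁻¹ : ℝ) : ℂ)) ^ 2 * 3 = 1 := by
    rw [← Complex.ofReal_pow, inv_pow, Real.sq_sqrt (by norm_num)]
    push_cast
    norm_num
  ext j k
  have hentry : (dft3 * dft3.conjTranspose) j k
      = (((Real.sqrt 3)⁻¹ : ℝ) : ℂ) ^ 2 * ∑ m ∈ Finset.range 3, ζ ^ (m * (j + 2 * k : ℕ)) := by
    rw [Matrix.mul_apply, Finset.mul_sum, ← Fin.sum_univ_eq_sum_range]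
    refine Finset.sum_congr rfl fun m _ => ?_
    rw [Matrix.conjTranspose_apply, dft3_apply, dft3_apply, ← hζ_def, star_mul', star_pow, hstar,
      Complex.star_def, Complex.conj_ofReal]
    ring
  have hdvd : 3 ∣ (j + 2 * k : ℕ) ↔ j = k := by
    fin_cases j <;> fin_cases k <;> decide
  rw [hentry, hζ.sum_range_pow_mul, Matrix.one_apply]
  by_cases hjk : j = k
  · rw [if_pos hjk, if_pos (hdvd.2 hjk)]
    exact_mod_cast hc
  · rw [if_neg hjk, if_neg (mt hdvd.1 hjk), mul_zero]

lemma norm_sq_mul_PstarWeight {l : ℂ} {v : Fin 3 → ℂ} (hv : F3tilde.mulVec v = l • v)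
    (e : Fin 3) : ‖l‖ ^ 2 * PstarWeight v e = if e = 1 then 0 else Pweight v e := by
  have hF : l • dft3.mulVec v = pi02.mulVec v := by
    rw [← Matrix.mulVec_smul, ← hv, Matrix.mulVec_mulVec, F3tilde, ← Matrix.mul_assoc,
      dft3_mul_conjTranspose, Matrix.one_mul]
  have hπ : pi02.mulVec v e = if e = 1 then 0 else v e := by
    fin_cases e <;> simp [pi02, Matrix.mulVec, dotProduct]
  have hnorm := congrArg (fun w => ‖w e‖ ^ 2) hF
  simp only [Pi.smul_apply, smul_eq_mul, norm_mul, mul_pow, hπ] at hnorm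
  rw [PstarWeight, hnorm]
  split_ifs <;> simp [Pweight]

noncomputable def tildeWeight (vp vm : Fin 3 → ℂ) {n : ℕ} (η : ZMod n → Bool) (j : ZMod n)
    (m : ℤ) (e : Fin 3) : ℝ :=
  if 0 ≤ m then Pweight (if η (j + (m : ZMod n)) then vp else vm) e
  else PstarWeight (if η (j + (m : ZMod n)) then vp else vm) e

section tildeWeight

variable (vp vm : Fin 3 → ℂ) {n : ℕ} (η : ZMod n → Bool) (j : ZMod n)

lemma tildeWeight_add_one {i : ℤ} (hi : i ≠ -1) :
    tildeWeight vp vm η j (i + 1) = tildeWeight vp vm η (j + 1) i := by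
  have hidx : j + ((i + 1 : ℤ) : ZMod n) = j + 1 + (i : ZMod n) := by push_cast; ring
  have hsign : 0 ≤ i + 1 ↔ 0 ≤ i := by omega
  funext e
  simp only [tildeWeight, hidx, hsign]

lemma tildeWeight_zero : tildeWeight vp vm η j 0 = Pweight (if η j then vp else vm) := by
  funext e
  simp [tildeWeight]

lemma tildeWeight_add_one_neg_one :
    tildeWeight vp vm η (j + 1) (-1) = PstarWeight (if η j then vp else vm) := by
  funext e
  simp [tildeWeight]

end tildeWeight

lemma IsTildeFamily.measure_shiftMap_preimage_inter {lp lm : ℂ} {vp vm : Fin 3 → ℂ}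
    (hvp : F3tilde.mulVec vp = lp • vp) (hvm : F3tilde.mulVec vm = lm • vm) {n : ℕ}
    {hn : 0 < n} {η : ZMod n → Bool} {μt : ZMod n → Measure (ℤ → Fin 3)}
    (hfam : IsTildeFamily vp vm n hn η μt) (j : ZMod n) {S : Set (ℤ → Fin 3)}
    (hS : MeasurableSet S) :
    μt j (shiftMap ⁻¹' S ∩ {ε | ε 0 ≠ 1})
      = ENNReal.ofReal (‖if η j then lp else lm‖ ^ 2) * μt (j + 1) S := by
  have hv : F3tilde.mulVec (if η j then vp else vm)
      = (if η j then lp else lm) • (if η j then vp else vm) := by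
    split_ifs
    exacts [hvp, hvm]
  have hprod : ∀ j, IsProductMeasure (μt j) (tildeWeight vp vm η j) := fun j => (hfam j).2
  refine (hprod j).measure_shiftMap_preimage_inter (hprod (j + 1)) (sq_nonneg _)
    (fun i hi => tildeWeight_add_one vp vm η j hi) (fun e => ?_) hS
  rw [tildeWeight_zero, tildeWeight_add_one_neg_one, norm_sq_mul_PstarWeight hv]

lemma ZMod.prod_range_natCast {M : Type*} [CommMonoid M] {n : ℕ} [NeZero n] (f : ZMod n → M) :
    ∏ m ∈ Finset.range n, f m = ∏ x, f x :=
  Finset.prod_nbij' (fun m => (m : ZMod n)) ZMod.val (fun _ _ => Finset.mem_univ _)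
    (fun x _ => Finset.mem_range.2 x.val_lt)
    (fun _ hm => ZMod.val_cast_of_lt (Finset.mem_range.1 hm))
    (fun x _ => ZMod.natCast_zmod_val x) (fun _ _ => rfl)

lemma ZMod.prod_range_val_add_one {M : Type*} [CommMonoid M] {n : ℕ} [NeZero n]
    {f : ZMod n → M} (hf : ∏ x, f x = 1) (j : ZMod n) :
    ∏ m ∈ Finset.range (j + 1).val, f m = (∏ m ∈ Finset.range j.val, f m) * f j := by
  have hj : f j = f (j.val : ZMod n) := by rw [ZMod.natCast_zmod_val]
  rw [hj, ← Finset.prod_range_succ (fun m : ℕ => f m)]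
  have hval : (j + 1).val = (j.val + 1) % n := by
    rw [ZMod.val_add, ZMod.val_one_eq_one_mod, Nat.add_mod_mod]
  obtain hlt | heq : j.val + 1 < n ∨ j.val + 1 = n := by have := j.val_lt; omega
  · rw [hval, Nat.mod_eq_of_lt hlt]
  · rw [hval, heq, Nat.mod_self, Finset.prod_range_zero, ZMod.prod_range_natCast, hf]

section Weights

variable (lp lm : ℂ) {n : ℕ} (hn : 0 < n) (η : ZMod n → Bool)

lemma LamEta_pos (hlp : lp ≠ 0) (hlm : lm ≠ 0) : 0 < LamEta lp lm n hn η :=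
  mul_pos (Real.rpow_pos_of_pos (norm_pos_iff.2 hlm) _)
    (Real.rpow_pos_of_pos (norm_pos_iff.2 hlp) _)

lemma Cweight_pos (hlp : lp ≠ 0) (hlm : lm ≠ 0) (j : ZMod n) : 0 < Cweight lp lm n hn η j :=
  Finset.prod_pos fun m _ => div_pos (pow_pos (norm_pos_iff.2 (by split_ifs <;> assumption)) 2)
    (LamEta_pos lp lm hn η hlp hlm)

lemma prod_norm_sq_eq_LamEta_pow [NeZero n] :
    ∏ x : ZMod n, ‖if η x then lp else lm‖ ^ 2 = LamEta lp lm n hn η ^ n := by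
  set k := (Finset.univ.filter fun j => η j = true).card with hk
  have hkn : k ≤ n := (Finset.card_filter_le _ _).trans (by rw [Finset.card_univ, ZMod.card])
  have hcompl : (Finset.univ.filter fun j => ¬ η j = true).card = n - k := by
    have := Finset.card_filter_add_card_filter_not (s := Finset.univ) fun j : ZMod n => η j = true
    rw [Finset.card_univ, ZMod.card] at this
    omega
  have hn' : (n : ℝ) ≠ 0 := Nat.cast_ne_zero.2 hn.ne'
  have ht : tplus n hn η = k / n := rfl
  have h1t : 1 - tplus n hn η = ((n - k : ℕ) : ℝ) / n := by
    rw [ht, Nat.cast_sub hkn]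
    field_simp
  have hroot : ∀ x : ℝ, 0 ≤ x → ∀ m : ℕ, (x ^ (2 * ((m : ℝ) / n))) ^ n = (x ^ 2) ^ m := by
    intro x hx m
    rw [← Real.rpow_mul_natCast hx, mul_assoc, div_mul_cancel₀ _ hn', ← Nat.cast_ofNat,
      ← Nat.cast_mul, Real.rpow_natCast, pow_mul]
  simp_rw [apply_ite (fun z : ℂ => ‖z‖ ^ 2)]
  rw [Finset.prod_ite, Finset.prod_const, Finset.prod_const, hcompl, ← hk, LamEta, mul_pow, h1t, ht,
    hroot _ (norm_nonneg _), hroot _ (norm_nonneg _), mul_comm]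

lemma Cweight_mul_norm_sq (hlp : lp ≠ 0) (hlm : lm ≠ 0) [NeZero n] (j : ZMod n) :
    Cweight lp lm n hn η j * ‖if η j then lp else lm‖ ^ 2
      = LamEta lp lm n hn η * Cweight lp lm n hn η (j + 1) := by
  have hΛ := (LamEta_pos lp lm hn η hlp hlm).ne'
  have hcycle : ∏ x : ZMod n, ‖if η x then lp else lm‖ ^ 2 / LamEta lp lm n hn η = 1 := by
    rw [Finset.prod_div_distrib, prod_norm_sq_eq_LamEta_pow lp lm hn, Finset.prod_const,
      Finset.card_univ, ZMod.card, div_self (pow_ne_zero _ hΛ)]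
  rw [Cweight, Cweight, ZMod.prod_range_val_add_one hcycle j]
  field_simp

end Weights

lemma sum_ofReal_mul_eq_of_cycle {n : ℕ} [NeZero n] {C a : ZMod n → ℝ} {Λ : ℝ}
    (hC : ∀ j, 0 ≤ C j) (hΛ : 0 ≤ Λ) (hrec : ∀ j, C j * a j = Λ * C (j + 1))
    {x y : ZMod n → ℝ≥0∞} (hxy : ∀ j, x j = ENNReal.ofReal (a j) * y (j + 1)) :
    ∑ j, ENNReal.ofReal (C j) * x j = ENNReal.ofReal Λ * ∑ j, ENNReal.ofReal (C j) * y j := by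
  calc ∑ j, ENNReal.ofReal (C j) * x j
      = ∑ j, ENNReal.ofReal Λ * (ENNReal.ofReal (C (j + 1)) * y (j + 1)) := by
        refine Finset.sum_congr rfl fun j _ => ?_
        rw [hxy, ← mul_assoc, ← ENNReal.ofReal_mul (hC j), hrec, ENNReal.ofReal_mul hΛ, mul_assoc]
    _ = ENNReal.ofReal Λ * ∑ j, ENNReal.ofReal (C j) * y j := by
        rw [← Finset.mul_sum]
        exact congrArg _ (Equiv.sum_comp (Equiv.addRight 1) fun j => ENNReal.ofReal (C j) * y j)

section muEta

variable {lp lm : ℂ} {n : ℕ} (hn : 0 < n) (η : ZMod n → Bool) (μt : ZMod n → Measure (ℤ → Fin 3))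

lemma muEta_apply [NeZero n] (S : Set (ℤ → Fin 3)) :
    muEta lp lm n hn η μt S = (ENNReal.ofReal (∑ j, Cweight lp lm n hn η j))⁻¹ *
      ∑ j, ENNReal.ofReal (Cweight lp lm n hn η j) * μt j S := by
  simp [muEta]

lemma isProbabilityMeasure_muEta (hlp : lp ≠ 0) (hlm : lm ≠ 0)
    (hμt : ∀ j, IsProbabilityMeasure (μt j)) : IsProbabilityMeasure (muEta lp lm n hn η μt) := by
  have : NeZero n := ⟨hn.ne'⟩
  have hC := Cweight_pos lp lm hn η hlp hlm
  have hsum : 0 < ∑ j, Cweight lp lm n hn η j :=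
    Finset.sum_pos (fun j _ => hC j) Finset.univ_nonempty
  constructor
  rw [muEta_apply]
  simp only [measure_univ, mul_one]
  rw [← ENNReal.ofReal_sum_of_nonneg fun j _ => (hC j).le]
  exact ENNReal.inv_mul_cancel (ENNReal.ofReal_pos.2 hsum).ne' ENNReal.ofReal_ne_top

end muEta

theorem muEta_eigenmeasure_general
    (lp lm : ℂ) (hlp : lp ≠ 0) (hlm : lm ≠ 0) (vp vm : Fin 3 → ℂ)
    (hvp : F3tilde.mulVec vp = lp • vp) (hvm : F3tilde.mulVec vm = lm • vm)
    (n : ℕ) (hn : 0 < n) (η : ZMod n → Bool)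
    (μt : ZMod n → Measure (ℤ → Fin 3)) (hfam : IsTildeFamily vp vm n hn η μt) :
    (∀ (j : ZMod n) (S : Set (ℤ → Fin 3)), MeasurableSet S →
        μt j (shiftMap ⁻¹' S ∩ {ε | ε 0 ≠ 1})
          = ENNReal.ofReal (‖if η j then lp else lm‖ ^ 2) * μt (j + 1) S) ∧
    IsProbabilityMeasure (muEta lp lm n hn η μt) ∧
    ∀ S : Set (ℤ → Fin 3), MeasurableSet S →
      muEta lp lm n hn η μt (shiftMap ⁻¹' S ∩ {ε | ε 0 ≠ 1})
        = ENNReal.ofReal (LamEta lp lm n hn η) * muEta lp lm n hn η μt S := by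
  have : NeZero n := ⟨hn.ne'⟩
  have hstep : ∀ j S, MeasurableSet S → μt j (shiftMap ⁻¹' S ∩ {ε | ε 0 ≠ 1})
      = ENNReal.ofReal (‖if η j then lp else lm‖ ^ 2) * μt (j + 1) S :=
    fun j _ hS => hfam.measure_shiftMap_preimage_inter hvp hvm j hS
  refine ⟨hstep, isProbabilityMeasure_muEta hn η μt hlp hlm fun j => (hfam j).1, fun S hS => ?_⟩
  rw [muEta_apply, muEta_apply, sum_ofReal_mul_eq_of_cycle
    (fun j => (Cweight_pos lp lm hn η hlp hlm j).le) (LamEta_pos lp lm hn η hlp hlm).le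
    (Cweight_mul_norm_sq lp lm hn η hlp hlm) (y := fun j => μt j S) fun j => hstep j S hS]
  ring

/-- (a) Each `μ̃_{η,j}` satisfies
`μ̃_{η,j}(σ̂⁻¹S ∩ {ε₀ ≠ 1}) = |λ_{η(j)}|²·μ̃_{η,j+1}(S)`.  (b) `μ_η` is a probability
measure and an eigenmeasure of the open shift with decay rate `Λ_η`. -/
theorem muEta_eigenmeasure
    (lp lm : ℂ) (hlp : lp ≠ 0) (hlm : lm ≠ 0) (vp vm : Fin 3 → ℂ)
    (hvp : F3tilde.mulVec vp = lp • vp) (hvm : F3tilde.mulVec vm = lm • vm)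
    (hvpu : ∑ e, ‖vp e‖ ^ 2 = 1) (hvmu : ∑ e, ‖vm e‖ ^ 2 = 1)
    (n : ℕ) (hn : 0 < n) (η : ZMod n → Bool)
    (μt : ZMod n → Measure (ℤ → Fin 3)) (hfam : IsTildeFamily vp vm n hn η μt) :
    (∀ (j : ZMod n) (S : Set (ℤ → Fin 3)), MeasurableSet S →
        μt j (shiftMap ⁻¹' S ∩ {ε | ε 0 ≠ 1})
          = ENNReal.ofReal (‖if η j then lp else lm‖ ^ 2) * μt (j + 1) S) ∧
    IsProbabilityMeasure (muEta lp lm n hn η μt) ∧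
    ∀ S : Set (ℤ → Fin 3), MeasurableSet S →
      muEta lp lm n hn η μt (shiftMap ⁻¹' S ∩ {ε | ε 0 ≠ 1})
        = ENNReal.ofReal (LamEta lp lm n hn η) * muEta lp lm n hn η μt S :=
  muEta_eigenmeasure_general lp lm hlp hlm vp vm hvp hvm n hn η μt hfam
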